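/- arXiv:2112.13185 — 3 statements merged into one kernel-verified Lean document; each statement's English description precedes it below -/
import Mathlib

section
/- Let L be a discrete additive subgroup of ℝ^n (i.e., there exists λ > 0 such that every nonzero x ∈ L has |x| ≥ λ). If α₁, ..., α_m ∈ L are linearly independent over ℤ, then they are linearly independent over ℝ. -/
open Submodule Module

theorem discrete_subgroup_int_indep_implies_real_indep
    (n m : ℕ) (L : AddSubgroup (EuclideanSpace ℝ (Fin n)))
    (hdisc : ∃ ε > 0, ∀ x ∈ L, x ≠ 0 → ε ≤ ‖x‖)
    (α : Fin m → EuclideanSpace ℝ (Fin n)) (hα : ∀ i, α i ∈ L)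
    (hZ : LinearIndependent ℤ α) : LinearIndependent ℝ α := by
  classical
  obtain ⟨ε, hε, hεle⟩ := hdisc
  let E := EuclideanSpace ℝ (Fin n)
  let L₀ : Submodule ℤ E := span ℤ (Set.range α)
  have hL₀L : ∀ x ∈ L₀, x ∈ L := by
    intro x hx
    have h : L₀ ≤ AddSubgroup.toIntSubmodule L := by
      rw [span_le]
      rintro _ ⟨i, rfl⟩
      exact hα i
    exact h hx
  have hdL₀ : DiscreteTopology L₀ := by
    refine DiscreteTopology.of_forall_le_norm hε ?_
    rintro ⟨x, hx⟩ hne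
    have hx0 : x ≠ 0 := by simpa [Subtype.ext_iff] using hne
    exact hεle x (hL₀L x hx) hx0
  let F : Submodule ℝ E := span ℝ (L₀ : Set E)
  let f := F.subtype
  let L₁ : Submodule ℤ F := L₀.comap (f.restrictScalars ℤ)
  have h_img : f '' L₁ = L₀ := by
    rw [← LinearMap.coe_restrictScalars ℤ f, ← Submodule.map_coe (f.restrictScalars ℤ),
      Submodule.map_comap_eq_self]
    exact fun x hx ↦ LinearMap.mem_range.mpr ⟨⟨x, Submodule.subset_span hx⟩, rfl⟩
  have hmap : L₁.map (f.restrictScalars ℤ) = L₀ := SetLike.ext'_iff.mpr h_img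
  have hd₁ : DiscreteTopology L₁ := by
    refine DiscreteTopology.preimage_of_continuous_injective (L₀ : Set E) ?_ (injective_subtype _)
    exact LinearMap.continuous_of_finiteDimensional f
  have hZL : IsZLattice ℝ L₁ := ⟨by
    rw [← (Submodule.map_injective_of_injective (injective_subtype F)).eq_iff, Submodule.map_span,
      Submodule.map_top, range_subtype, h_img]⟩
  have h1 : finrank ℤ L₁ = finrank ℝ F := ZLattice.rank ℝ L₁
  have h2 : finrank ℤ L₀ = m := by
    simpa using finrank_span_eq_card hZ
  have h3 : finrank ℤ L₁ = finrank ℤ L₀ := by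
    rw [← hmap]
    exact (Submodule.equivMapOfInjective (f.restrictScalars ℤ)
      (injective_subtype F) L₁).finrank_eq
  have h4 : F = span ℝ (Set.range α) := span_span_of_tower ℤ ℝ _
  rw [linearIndependent_iff_card_eq_finrank_span]
  have : finrank ℝ (span ℝ (Set.range α)) = m := by
    rw [← h4, ← h1, h3, h2]
  simpa [Set.finrank] using this.symm
end

section
/- Let L₁, L₂ ⊆ ℝ^n be lattices with rank(L₁ ∩ L₂) = rank(L₁). Then L₁ + L₂ = {a + b : a ∈ L₁, b ∈ L₂} is again a lattice (a discrete additive subgroup) of ℝ^n. -/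
/-!
A discrete subgroup of a finite-dimensional real space is a finitely generated free ℤ-module
whose rank is the dimension of its real span. So the rank hypothesis says that `L₁ ⊓ L₂` has
full rank in `L₁`, hence finite index. By the second isomorphism theorem `L₂` then has finite index in `L₁ ⊔ L₂`,
and a group containing a discrete subgroup of finite index is discrete.
-/

open Module Submodule

theorem Submodule.finite_quotient_of_finrank_eq {M : Type*} [AddCommGroup M] [Module.Finite ℤ M]
    (N : Submodule ℤ M) (h : finrank ℤ N = finrank ℤ M) : Finite (M ⧸ N) := by
  have h0 : finrank ℤ (M ⧸ N) = 0 := by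
    have := N.finrank_quotient_add_finrank
    omega
  exact Module.finite_of_fg_torsion _ (Module.finrank_eq_zero_iff_isTorsion.mp h0)

theorem AddSubgroup.discreteTopology_iff_exists_pos_le_norm {E : Type*} [NormedAddCommGroup E]
    (L : AddSubgroup E) : DiscreteTopology L ↔ ∃ ε > 0, ∀ x ∈ L, x ≠ 0 → ε ≤ ‖x‖ := by
  refine ⟨fun _ ↦ ?_, fun ⟨ε, hε, hsep⟩ ↦
    .of_forall_le_norm hε fun x hx ↦ hsep x x.2 (by simpa [← ZeroMemClass.coe_eq_zero] using hx)⟩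
  obtain ⟨ε, hε, hball⟩ := Metric.isOpen_iff.mp (isOpen_discrete ({0} : Set L)) 0 rfl
  refine ⟨ε, hε, fun x hx hx0 ↦ not_lt.mp fun hlt ↦ hx0 ?_⟩
  simpa using hball (show (⟨x, hx⟩ : L) ∈ Metric.ball 0 ε by simpa using hlt)

section FiniteDimensional

variable {E : Type*} [NormedAddCommGroup E] [NormedSpace ℝ E] [FiniteDimensional ℝ E]

theorem Submodule.finrank_int_eq_finrank_span (L : Submodule ℤ E) [DiscreteTopology L] :
    finrank ℤ L = finrank ℝ (span ℝ (L : Set E)) := by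
  have := Real.finrank_eq_int_finrank_of_discrete (s := (L : Set E)) (by rwa [span_eq])
  rw [← (LinearEquiv.ofEq _ _ (span_eq L)).finrank_eq]
  exact this.symm

theorem Submodule.relIndex_ne_zero_of_finrank_span_eq {H K : Submodule ℤ E} [DiscreteTopology K]
    (hHK : H ≤ K) (h : finrank ℝ (span ℝ (H : Set E)) = finrank ℝ (span ℝ (K : Set E))) :
    H.toAddSubgroup.relIndex K.toAddSubgroup ≠ 0 := by
  have : DiscreteTopology H := .of_subset ‹DiscreteTopology K› hHK
  have hrank : finrank ℤ (H.comap K.subtype) = finrank ℤ K := by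
    rw [(comapSubtypeEquivOfLe hHK).finrank_eq, finrank_int_eq_finrank_span,
      finrank_int_eq_finrank_span, h]
  have := (H.comap K.subtype).finite_quotient_of_finrank_eq hrank
  exact AddSubgroup.index_ne_zero_of_finite (hH := this)

theorem AddSubgroup.discreteTopology_sup {L₁ L₂ : AddSubgroup E} [DiscreteTopology L₁]
    [DiscreteTopology L₂]
    (h : finrank ℝ (span ℝ ((L₁ ⊓ L₂ : AddSubgroup E) : Set E)) =
      finrank ℝ (span ℝ (L₁ : Set E))) :
    DiscreteTopology ↥(L₁ ⊔ L₂) := by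
  have : DiscreteTopology L₁.toIntSubmodule := ‹DiscreteTopology L₁›
  have : L₂.IsFiniteRelIndex (L₁ ⊔ L₂) := ⟨by
    rw [relIndex_sup_right, ← inf_relIndex_right, inf_comm]
    exact relIndex_ne_zero_of_finrank_span_eq (H := (L₁ ⊓ L₂).toIntSubmodule)
      (K := L₁.toIntSubmodule) (fun _ hx ↦ hx.1) h⟩
  exact (discreteTopology_iff_of_isFiniteRelIndex le_sup_right).mp ‹_›

end FiniteDimensional

theorem sum_of_lattices_is_lattice
    (n : ℕ) (L₁ L₂ : AddSubgroup (EuclideanSpace ℝ (Fin n)))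
    (h1 : ∃ ε > 0, ∀ x ∈ L₁, x ≠ 0 → ε ≤ ‖x‖)
    (h2 : ∃ ε > 0, ∀ x ∈ L₂, x ≠ 0 → ε ≤ ‖x‖)
    (hrank : Module.finrank ℝ (Submodule.span ℝ ((L₁ ⊓ L₂ : AddSubgroup (EuclideanSpace ℝ (Fin n))) : Set (EuclideanSpace ℝ (Fin n))))
      = Module.finrank ℝ (Submodule.span ℝ (L₁ : Set (EuclideanSpace ℝ (Fin n))))) :
    ∃ ε > 0, ∀ x ∈ L₁ ⊔ L₂, x ≠ 0 → ε ≤ ‖x‖ := by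
  rw [← AddSubgroup.discreteTopology_iff_exists_pos_le_norm] at h1 h2 ⊢
  exact AddSubgroup.discreteTopology_sup hrank
end

section
/- With H the companion matrix of φ(x) ∈ ℤ[x] (a degree-n polynomial with nonzero constant term and no repeated complex roots) and H*(f) = [f, Hf, ..., H^{n−1}f], for all f, g ∈ ℝ^n: H*(f)H*(g) = H*(H*(f)g), and H*(f) and H*(g) commute. -/
open Polynomial Matrix

/-- The rotation (companion) matrix of `φ(x) = x^n - φ_{n-1}x^{n-1} - ⋯ - φ₁x - φ₀`. -/
def rotH (n : ℕ) (φ : Fin n → ℝ) : Matrix (Fin n) (Fin n) ℝ :=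
  Matrix.of fun i j => if (j : ℕ) + 1 = n then φ i
    else if (i : ℕ) = (j : ℕ) + 1 then 1 else 0

/-- The ideal matrix `H*(f) = [f, Hf, H²f, …, H^{n-1}f]`. -/
noncomputable def idealMatrix (n : ℕ) (H : Matrix (Fin n) (Fin n) ℝ) (f : Fin n → ℝ) :
    Matrix (Fin n) (Fin n) ℝ :=
  Matrix.of fun i k => ((H ^ (k : ℕ)).mulVec f) i

/-- The polynomial `φ(x) = x^n - φ_{n-1}x^{n-1} - ⋯ - φ₁x - φ₀ ∈ ℤ[x]`. -/
noncomputable def intPoly (n : ℕ) (φ : Fin n → ℤ) : Polynomial ℤ :=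
  X ^ n - ∑ i : Fin n, C (φ i) * X ^ (i : ℕ)

/-- The polynomial `f₀ + f₁ x + ⋯ + f_{n-1}x^{n-1}` attached to a vector `f ∈ ℝ^n`. -/
noncomputable def realPoly (n : ℕ) (f : Fin n → ℝ) : Polynomial ℝ :=
  ∑ i : Fin n, C (f i) * X ^ (i : ℕ)

lemma rotH_pow_single (n : ℕ) (hn : 0 < n) (φ : Fin n → ℝ) :
    ∀ (k : ℕ) (hk : k < n),
      ((rotH n φ) ^ k).mulVec (Pi.single (⟨0, hn⟩ : Fin n) 1) = Pi.single ⟨k, hk⟩ 1 := by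
  intro k
  induction k with
  | zero =>
    intro hk
    rw [pow_zero, one_mulVec]
  | succ k ih =>
    intro hk
    have hk' : k < n := Nat.lt_of_succ_lt hk
    rw [pow_succ', ← mulVec_mulVec, ih hk']
    funext i
    simp only [mulVec, dotProduct, rotH, Matrix.of_apply]
    rw [Finset.sum_eq_single (⟨k, hk'⟩ : Fin n)]
    · have : (k : ℕ) + 1 ≠ n := Nat.ne_of_lt hk
      simp only [this, if_false, Pi.single_apply]
      by_cases h : i = (⟨k+1, hk⟩ : Fin n)
      · subst h; simp
      · have : (i : ℕ) ≠ k + 1 := fun hc => h (Fin.ext hc)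
        simp [h, this]
    · intro b _ hb
      simp [Pi.single_apply, hb]
    · simp

lemma rotH_pow_entry_symm (n : ℕ) (hn : 0 < n) (φ : Fin n → ℝ) (i j k : Fin n) :
    ((rotH n φ) ^ (j : ℕ)) i k = ((rotH n φ) ^ (k : ℕ)) i j := by
  have key : ∀ a b : Fin n,
      ((rotH n φ) ^ (a : ℕ)) i b
        = (((rotH n φ) ^ ((a : ℕ) + (b : ℕ))).mulVec (Pi.single (⟨0, hn⟩ : Fin n) 1)) i := by
    intro a b
    rw [pow_add, ← mulVec_mulVec, rotH_pow_single n hn φ b b.isLt]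
    simp [mulVec, dotProduct, Pi.single_apply]
  rw [key j k, key k j, Nat.add_comm]

lemma idealMatrix_eq_aeval (n : ℕ) (hn : 0 < n) (φ : Fin n → ℝ) (f : Fin n → ℝ) :
    idealMatrix n (rotH n φ) f = aeval (rotH n φ) (realPoly n f) := by
  ext i k
  simp only [idealMatrix, Matrix.of_apply, realPoly, map_sum, _root_.map_mul, aeval_C, aeval_X_pow,
    mulVec, dotProduct]
  rw [Matrix.sum_apply]
  apply Finset.sum_congr rfl
  intro j _
  rw [Matrix.mul_apply]
  rw [Finset.sum_eq_single i]
  · rw [Matrix.algebraMap_matrix_apply, if_pos rfl, rotH_pow_entry_symm n hn φ i j k, mul_comm, Algebra.algebraMap_self_apply]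
  · intro b _ hb
    rw [Matrix.algebraMap_matrix_apply, if_neg hb.symm, zero_mul]
  · simp

theorem idealMatrix_mul_eq_and_comm
    (n : ℕ) (hn : 0 < n) (φ : Fin n → ℤ) (hφ0 : φ ⟨0, hn⟩ ≠ 0)
    (hsq : Squarefree ((intPoly n φ).map (Int.castRingHom ℂ)))
    (f g : Fin n → ℝ) :
    idealMatrix n (rotH n fun i => (φ i : ℝ)) f * idealMatrix n (rotH n fun i => (φ i : ℝ)) g
        = idealMatrix n (rotH n fun i => (φ i : ℝ))
            ((idealMatrix n (rotH n fun i => (φ i : ℝ)) f).mulVec g) ∧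
    idealMatrix n (rotH n fun i => (φ i : ℝ)) f * idealMatrix n (rotH n fun i => (φ i : ℝ)) g
        = idealMatrix n (rotH n fun i => (φ i : ℝ)) g * idealMatrix n (rotH n fun i => (φ i : ℝ)) f := by
  set H := rotH n fun i => (φ i : ℝ) with hH
  have hcomm : ∀ u : Fin n → ℝ, ∀ k : ℕ,
      idealMatrix n H u * H ^ k = H ^ k * idealMatrix n H u := by
    intro u k
    rw [idealMatrix_eq_aeval n hn _ u]
    set q := realPoly n u
    calc aeval H q * H ^ k = aeval H (q * X ^ k) := by rw [_root_.map_mul, aeval_X_pow]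
      _ = aeval H (X ^ k * q) := by rw [mul_comm]
      _ = H ^ k * aeval H q := by rw [_root_.map_mul, aeval_X_pow]
  have key : ∀ u v : Fin n → ℝ,
      idealMatrix n H u * idealMatrix n H v = idealMatrix n H ((idealMatrix n H u).mulVec v) := by
    intro u v
    ext i k
    have h1 : (idealMatrix n H u * idealMatrix n H v) i k
        = ((idealMatrix n H u).mulVec ((H ^ (k : ℕ)).mulVec v)) i := by
      simp only [Matrix.mul_apply, mulVec, dotProduct, idealMatrix, Matrix.of_apply]
    have h2 : idealMatrix n H ((idealMatrix n H u).mulVec v) i k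
        = ((H ^ (k : ℕ)).mulVec ((idealMatrix n H u).mulVec v)) i := rfl
    rw [h1, h2, mulVec_mulVec, hcomm u (k : ℕ), ← mulVec_mulVec]
  refine ⟨key f g, ?_⟩
  rw [idealMatrix_eq_aeval n hn _ f, idealMatrix_eq_aeval n hn _ g, ← _root_.map_mul,
    mul_comm, _root_.map_mul]
end
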